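/- Theorem 7.8 of [4] (criterion Z): Let a countably additive transition function p on a measurable space (X,Σ) be given. Suppose there exist a sequence of reals ε_n ≥ 0 with ε_n → 0 and a sequence of nonempty sets K_n ∈ Σ with K₁ ⊃ K₂ ⊃ …, ⋂_{n=1}^∞ K_n = ∅, and p(x,K_n) ≥ 1 − ε_n for all x ∈ K_{n+1} and all n. Then there exists an invariant purely finitely additive probability measure μ (Aμ = μ) with μ(K_n) = 1 for all n. -/

import Mathlib

/-!
Start the chain deep inside the sets: from `x ∈ K (b + m)` the `k`-step law gives `K b` mass at
least `1 - ∑_{j<k} ε (b + j)`. Choosing `b` so that `ε ≤ 1/(m+1)²` beyond `b`, the Cesàro average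
of the first `m + 1` steps gives `K b` mass at least `1 - 1/(m+1)` and is invariant up to
`1/(m+1)`. A limit of these averages along a free ultrafilter is a finitely additive probability
`μ` with `μ (K n) = 1`. Invariance passes to the limit through the layer-cake formula, because the
distribution functions `t ↦ c_m {p(·, E) > t}` are antitone. Finally `X` is the countable union
of the `μ`-null sets `(K n)ᶜ`, so every countably additive `λ ≤ μ` vanishes.
-/

open MeasureTheory Set Filter Topology Function

/-- A bounded finitely additive (signed) set function on the σ-algebra. -/
def IsFinAdd {X : Type*} [MeasurableSpace X] (μ : Set X → ℝ) : Prop :=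
  μ ∅ = 0 ∧ ∀ E F : Set X, MeasurableSet E → MeasurableSet F → Disjoint E F →
    μ (E ∪ F) = μ E + μ F

/-- Nonnegativity on measurable sets. -/
def IsNonnegSF {X : Type*} [MeasurableSpace X] (μ : Set X → ℝ) : Prop :=
  ∀ E : Set X, MeasurableSet E → 0 ≤ μ E

/-- Countable additivity on the σ-algebra. -/
def IsCtblAdd {X : Type*} [MeasurableSpace X] (μ : Set X → ℝ) : Prop :=
  ∀ E : ℕ → Set X, (∀ n, MeasurableSet (E n)) → Pairwise (Disjoint on E) →
    HasSum (fun n => μ (E n)) (μ (⋃ n, E n))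

/-- A nonnegative finitely additive measure is purely finitely additive if the only
countably additive measure `lam` with `0 ≤ lam ≤ μ` is `lam = 0`. -/
def IsPurelyFinAdd {X : Type*} [MeasurableSpace X] (μ : Set X → ℝ) : Prop :=
  ∀ lam : Set X → ℝ, IsFinAdd lam → IsCtblAdd lam →
    (∀ E, MeasurableSet E → 0 ≤ lam E) → (∀ E, MeasurableSet E → lam E ≤ μ E) →
    ∀ E, MeasurableSet E → lam E = 0

/-- A countably additive transition function (transition probability). -/
def IsTransFun {X : Type*} [MeasurableSpace X] (p : X → Set X → ℝ) : Prop :=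
  (∀ (x : X) (E : Set X), MeasurableSet E → 0 ≤ p x E ∧ p x E ≤ 1) ∧
  (∀ x : X, p x Set.univ = 1) ∧
  (∀ E : Set X, MeasurableSet E → Measurable fun x => p x E) ∧
  (∀ x : X, IsFinAdd (p x) ∧ IsCtblAdd (p x))

/-- The integral of a bounded measurable function with respect to a (finitely additive)
set function, defined by the layer-cake formula. -/
noncomputable def faIntegral {X : Type*} [MeasurableSpace X] (μ : Set X → ℝ) (f : X → ℝ) : ℝ :=
  (∫ t in Set.Ioi (0:ℝ), μ {x | t < f x}) - (∫ t in Set.Ioi (0:ℝ), μ {x | f x < -t})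

/-- The Markov operator `A` on finitely additive measures: `(Aμ)(E) = ∫ p(x,E) μ(dx)`. -/
noncomputable def markovOp {X : Type*} [MeasurableSpace X] (p : X → Set X → ℝ)
    (μ : Set X → ℝ) : Set X → ℝ :=
  fun E => faIntegral μ fun x => p x E

/-- `Δ_ba`: the set of invariant finitely additive probability measures. -/
def InvProbSet {X : Type*} [MeasurableSpace X] (p : X → Set X → ℝ) : Set (Set X → ℝ) :=
  {μ | IsFinAdd μ ∧ IsNonnegSF μ ∧ μ Set.univ = 1 ∧
    ∀ E : Set X, MeasurableSet E → markovOp p μ E = μ E}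

open ProbabilityTheory
open scoped ENNReal

section PurelyFinAdd

variable {X : Type*} [MeasurableSpace X]

noncomputable def IsCtblAdd.toMeasure {μ : Set X → ℝ} (hca : IsCtblAdd μ) (h0 : μ ∅ = 0)
    (hnn : ∀ E, MeasurableSet E → 0 ≤ μ E) : Measure X :=
  Measure.ofMeasurable (fun s _ => ENNReal.ofReal (μ s)) (by simp [h0]) fun E hE hdisj => by
    rw [← (hca E hE hdisj).tsum_eq,
      ENNReal.ofReal_tsum_of_nonneg (fun n => hnn _ (hE n)) (hca E hE hdisj).summable]

lemma IsCtblAdd.toMeasure_apply {μ : Set X → ℝ} (hca : IsCtblAdd μ) (h0 : μ ∅ = 0)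
    (hnn : ∀ E, MeasurableSet E → 0 ≤ μ E) {s : Set X} (hs : MeasurableSet s) :
    hca.toMeasure h0 hnn s = ENNReal.ofReal (μ s) :=
  Measure.ofMeasurable_apply s hs

theorem isPurelyFinAdd_of_iUnion_null {μ : Set X → ℝ} {S : ℕ → Set X}
    (hS : ∀ n, MeasurableSet (S n)) (hcover : ⋃ n, S n = univ) (hμS : ∀ n, μ (S n) = 0) :
    IsPurelyFinAdd μ := by
  rintro lam ⟨h0, -⟩ hca hnn hle E hE
  have hνS : ∀ n, hca.toMeasure h0 hnn (S n) = 0 := fun n => by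
    rw [hca.toMeasure_apply _ _ (hS n), ENNReal.ofReal_eq_zero, ← hμS n]
    exact hle _ (hS n)
  have hνE : hca.toMeasure h0 hnn E = 0 :=
    measure_mono_null (subset_univ E) (hcover ▸ measure_iUnion_null hνS)
  rw [hca.toMeasure_apply _ _ hE, ENNReal.ofReal_eq_zero] at hνE
  exact le_antisymm hνE (hnn E hE)

end PurelyFinAdd

namespace IsTransFun

variable {X : Type*} [MeasurableSpace X] {p : X → Set X → ℝ}

lemma nonneg (hp : IsTransFun p) (x : X) {E : Set X} (hE : MeasurableSet E) : 0 ≤ p x E :=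
  (hp.1 x E hE).1

lemma le_one (hp : IsTransFun p) (x : X) {E : Set X} (hE : MeasurableSet E) : p x E ≤ 1 :=
  (hp.1 x E hE).2

lemma apply_univ (hp : IsTransFun p) (x : X) : p x univ = 1 := hp.2.1 x

lemma measurable (hp : IsTransFun p) {E : Set X} (hE : MeasurableSet E) :
    Measurable fun x => p x E :=
  hp.2.2.1 E hE

lemma apply_empty (hp : IsTransFun p) (x : X) : p x ∅ = 0 := (hp.2.2.2 x).1.1

lemma isCtblAdd (hp : IsTransFun p) (x : X) : IsCtblAdd (p x) := (hp.2.2.2 x).2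

noncomputable def toKernel (hp : IsTransFun p) : Kernel X X where
  toFun x := (hp.isCtblAdd x).toMeasure (hp.apply_empty x) fun _ hE => hp.nonneg x hE
  measurable' := Measure.measurable_of_measurable_coe _ fun s hs => by
    simp_rw [IsCtblAdd.toMeasure_apply _ _ _ hs]
    exact (hp.measurable hs).ennreal_ofReal

lemma toKernel_apply (hp : IsTransFun p) (x : X) {s : Set X} (hs : MeasurableSet s) :
    hp.toKernel x s = ENNReal.ofReal (p x s) :=
  (hp.isCtblAdd x).toMeasure_apply (hp.apply_empty x) (fun _ hE => hp.nonneg x hE) hs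

lemma toKernel_real (hp : IsTransFun p) (x : X) {s : Set X} (hs : MeasurableSet s) :
    (hp.toKernel x).real s = p x s := by
  rw [measureReal_def, hp.toKernel_apply x hs, ENNReal.toReal_ofReal (hp.nonneg x hs)]

instance (hp : IsTransFun p) : IsMarkovKernel hp.toKernel :=
  ⟨fun x => ⟨by rw [hp.toKernel_apply x .univ, hp.apply_univ x, ENNReal.ofReal_one]⟩⟩

end IsTransFun

lemma MeasureTheory.measureReal_inv_smul_sum {X : Type*} [MeasurableSpace X]
    {μ : ℕ → Measure X} [∀ k, IsFiniteMeasure (μ k)] (N : ℕ) (E : Set X) :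
    ((N : ℝ≥0∞)⁻¹ • ∑ k ∈ Finset.range N, μ k).real E =
      (N : ℝ)⁻¹ * ∑ k ∈ Finset.range N, (μ k).real E := by
  simp [measureReal_def, ENNReal.toReal_mul, ENNReal.toReal_inv,
    ENNReal.toReal_sum fun k _ => measure_ne_top (μ k) E]

namespace ProbabilityTheory.Kernel

variable {X Y : Type*} [MeasurableSpace X] [MeasurableSpace Y]

instance isMarkovKernel_pow (κ : Kernel X X) [IsMarkovKernel κ] (k : ℕ) :
    IsMarkovKernel (κ ^ k) := by
  induction k with
  | zero => exact (inferInstance : IsMarkovKernel Kernel.id)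
  | succ k ih => exact (inferInstance : IsMarkovKernel ((κ ^ k) ∘ₖ κ))

lemma measureReal_comp_eq_integral (η : Kernel X Y) [IsFiniteKernel η] (ν : Measure X)
    {B : Set Y} (hB : MeasurableSet B) : (η ∘ₘ ν).real B = ∫ x, (η x).real B ∂ν := by
  rw [measureReal_def, Measure.bind_apply hB η.aemeasurable,
    ← integral_toReal (η.measurable_coe hB).aemeasurable (ae_of_all _ fun _ => measure_lt_top _ _)]
  rfl

lemma integrable_measureReal (η : Kernel X Y) [IsMarkovKernel η] (ν : Measure X)
    [IsFiniteMeasure ν] {B : Set Y} (hB : MeasurableSet B) :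
    Integrable (fun x => (η x).real B) ν :=
  .of_bound (η.measurable_coe hB).ennreal_toReal.aestronglyMeasurable 1 <| ae_of_all _ fun _ => by
    rw [Real.norm_of_nonneg measureReal_nonneg]
    exact measureReal_le_one

lemma sub_le_measureReal_comp {η : Kernel X Y} [IsMarkovKernel η] {ν : Measure X}
    [IsProbabilityMeasure ν] {A : Set X} {B : Set Y} (hA : MeasurableSet A)
    (hB : MeasurableSet B) {e : ℝ} (he : 0 ≤ e) (h : ∀ x ∈ A, 1 - e ≤ (η x).real B) :
    ν.real A - e ≤ (η ∘ₘ ν).real B := by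
  have hint := η.integrable_measureReal ν hB
  rw [η.measureReal_comp_eq_integral ν hB]
  calc ν.real A - e ≤ (1 - e) * ν.real A := by nlinarith [measureReal_le_one (μ := ν) (s := A)]
    _ ≤ ∫ x in A, (η x).real B ∂ν :=
      setIntegral_ge_of_const_le_real hA (measure_ne_top _ _) h hint.integrableOn
    _ ≤ ∫ x, (η x).real B ∂ν :=
      setIntegral_le_integral hint (ae_of_all _ fun _ => measureReal_nonneg)

variable (κ : Kernel X X)

noncomputable def cesaroMeasure (x : X) (N : ℕ) : Measure X :=
  (N : ℝ≥0∞)⁻¹ • ∑ k ∈ Finset.range N, (κ ^ k) x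

lemma comp_cesaroMeasure (x : X) (N : ℕ) :
    κ ∘ₘ κ.cesaroMeasure x N = (N : ℝ≥0∞)⁻¹ • ∑ k ∈ Finset.range N, (κ ^ (k + 1)) x := by
  rw [cesaroMeasure, Measure.comp_smul]
  congr 1
  induction N with
  | zero => simp
  | succ N ih =>
    rw [Finset.sum_range_succ, Finset.sum_range_succ, Measure.comp_add, ih, pow_succ']
    rfl

variable [IsMarkovKernel κ] {K : ℕ → Set X} {ε : ℕ → ℝ}

lemma one_sub_sum_le_pow_apply_real (hK : ∀ n, MeasurableSet (K n)) (hε : ∀ n, 0 ≤ ε n)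
    (hstep : ∀ n, ∀ x ∈ K (n + 1), 1 - ε n ≤ (κ x).real (K n)) (n k : ℕ) {x : X}
    (hx : x ∈ K (n + k)) : 1 - ∑ j ∈ Finset.range k, ε (n + j) ≤ ((κ ^ k) x).real (K n) := by
  induction k generalizing x with
  | zero =>
    rw [add_zero] at hx
    change _ ≤ (Kernel.id x).real (K n)
    simp [Kernel.id_apply, measureReal_def, Measure.dirac_apply_of_mem hx]
  | succ k ih =>
    have hpath := sub_le_measureReal_comp (ν := κ x) (hK (n + k)) (hK n)
      (Finset.sum_nonneg fun j _ => hε (n + j)) fun y hy => ih hy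
    rw [pow_succ, Finset.sum_range_succ]
    change _ ≤ ((κ ^ k) ∘ₘ κ x).real (K n)
    linarith [hstep (n + k) x hx]

lemma cesaroMeasure_real (x : X) (N : ℕ) (E : Set X) :
    (κ.cesaroMeasure x N).real E = (N : ℝ)⁻¹ * ∑ k ∈ Finset.range N, ((κ ^ k) x).real E :=
  measureReal_inv_smul_sum N E

lemma isProbabilityMeasure_cesaroMeasure (x : X) {N : ℕ} (hN : N ≠ 0) :
    IsProbabilityMeasure (κ.cesaroMeasure x N) := by
  refine ⟨(ENNReal.toReal_eq_one_iff _).1 ?_⟩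
  rw [← measureReal_def, κ.cesaroMeasure_real]
  simp [hN]

lemma abs_measureReal_comp_cesaroMeasure_sub_le (x : X) (N : ℕ) (E : Set X) :
    |(κ ∘ₘ κ.cesaroMeasure x N).real E - (κ.cesaroMeasure x N).real E| ≤ (N : ℝ)⁻¹ := by
  rw [κ.comp_cesaroMeasure, measureReal_inv_smul_sum, κ.cesaroMeasure_real, ← mul_sub,
    ← Finset.sum_sub_distrib, Finset.sum_range_sub (fun k => ((κ ^ k) x).real E), abs_mul,
    abs_of_nonneg (by positivity)]
  exact mul_le_of_le_one_right (by positivity) (abs_sub_le_of_nonneg_of_le measureReal_nonneg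
    measureReal_le_one measureReal_nonneg measureReal_le_one)

lemma le_cesaroMeasure_real {x : X} {N : ℕ} (hN : N ≠ 0) {E : Set X} {a : ℝ}
    (h : ∀ k < N, a ≤ ((κ ^ k) x).real E) : a ≤ (κ.cesaroMeasure x N).real E := by
  rw [κ.cesaroMeasure_real, le_inv_mul_iff₀ (by positivity)]
  simpa using Finset.card_nsmul_le_sum _ _ a fun k hk => h k (Finset.mem_range.1 hk)

lemma one_sub_inv_le_cesaroMeasure_real (hK : ∀ n, MeasurableSet (K n)) (hKanti : Antitone K)
    (hε : ∀ n, 0 ≤ ε n) (hstep : ∀ n, ∀ x ∈ K (n + 1), 1 - ε n ≤ (κ x).real (K n)) {m b : ℕ}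
    (hb : ∀ j, b ≤ j → ε j ≤ (((m : ℝ) + 1) ^ 2)⁻¹) {x : X} (hx : x ∈ K (b + m)) :
    1 - ((m : ℝ) + 1)⁻¹ ≤ (κ.cesaroMeasure x (m + 1)).real (K b) := by
  refine κ.le_cesaroMeasure_real m.succ_ne_zero fun k hk => ?_
  have hsum : ∑ j ∈ Finset.range k, ε (b + j) ≤ ((m : ℝ) + 1)⁻¹ :=
    calc ∑ j ∈ Finset.range k, ε (b + j) ≤ k * (((m : ℝ) + 1) ^ 2)⁻¹ := by
          simpa using Finset.sum_le_card_nsmul (Finset.range k) _ _ fun j _ =>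
            hb (b + j) (Nat.le_add_right b j)
      _ ≤ ((m : ℝ) + 1) * (((m : ℝ) + 1) ^ 2)⁻¹ := by
          gcongr
          exact_mod_cast hk.le
      _ = ((m : ℝ) + 1)⁻¹ := by field_simp
  linarith [κ.one_sub_sum_le_pow_apply_real hK hε hstep b k (hKanti (by omega) hx)]

theorem exists_almostInvariant_seq (hK : ∀ n, MeasurableSet (K n)) (hKne : ∀ n, (K n).Nonempty)
    (hKanti : Antitone K) (hε : ∀ n, 0 ≤ ε n) (hεlim : Tendsto ε atTop (𝓝 0))
    (hstep : ∀ n, ∀ x ∈ K (n + 1), 1 - ε n ≤ (κ x).real (K n)) :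
    ∃ c : ℕ → Measure X, (∀ m, IsProbabilityMeasure (c m)) ∧
      (∀ E, Tendsto (fun m => (κ ∘ₘ c m).real E - (c m).real E) atTop (𝓝 0)) ∧
      ∀ n, Tendsto (fun m => (c m).real (K n)) atTop (𝓝 1) := by
  have hdepth (m : ℕ) : ∃ b, m ≤ b ∧ ∀ j, b ≤ j → ε j ≤ (((m : ℝ) + 1) ^ 2)⁻¹ := by
    obtain ⟨b, hb⟩ := eventually_atTop.1 <|
      hεlim.eventually (ge_mem_nhds (by positivity : (0 : ℝ) < (((m : ℝ) + 1) ^ 2)⁻¹))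
    exact ⟨max b m, le_max_right b m, fun j hj => hb j (le_of_max_le_left hj)⟩
  choose b hmb hb using hdepth
  choose x hx using fun m => hKne (b m + m)
  have hinv : Tendsto (fun m : ℕ => ((m : ℝ) + 1)⁻¹) atTop (𝓝 0) := by
    simpa [one_div] using tendsto_one_div_add_atTop_nhds_zero_nat (𝕜 := ℝ)
  have hc := fun m => κ.isProbabilityMeasure_cesaroMeasure (x m) m.succ_ne_zero
  refine ⟨fun m => κ.cesaroMeasure (x m) (m + 1), hc,
    fun E => squeeze_zero_norm (fun m => ?_) hinv, fun n => ?_⟩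
  · simpa using κ.abs_measureReal_comp_cesaroMeasure_sub_le (x m) (m + 1) E
  refine tendsto_of_tendsto_of_tendsto_of_le_of_le' (by simpa using tendsto_const_nhds.sub hinv)
    tendsto_const_nhds (eventually_atTop.2 ⟨n, fun m hnm => ?_⟩)
    (.of_forall fun m => measureReal_le_one)
  exact (κ.one_sub_inv_le_cesaroMeasure_real hK hKanti hε hstep (hb m) (hx m)).trans
    (measureReal_mono (hKanti (hnm.trans (hmb m))))

end ProbabilityTheory.Kernel

lemma Antitone.rightSum_le_intervalIntegral_le_leftSum {g : ℝ → ℝ} (hg : Antitone g) {N : ℕ}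
    (hN : N ≠ 0) :
    (N : ℝ)⁻¹ * ∑ i ∈ Finset.range N, g ((i + 1 : ℕ) / N) ≤ ∫ t in 0..1, g t ∧
      ∫ t in 0..1, g t ≤ (N : ℝ)⁻¹ * ∑ i ∈ Finset.range N, g (i / N) := by
  have hN' : (0 : ℝ) < N := by positivity
  have hrescale : ∫ s in (0 : ℝ)..N, g (s / N) = N * ∫ t in 0..1, g t := by
    rw [intervalIntegral.integral_comp_div _ hN'.ne', zero_div, div_self hN'.ne', smul_eq_mul]
  have hanti : AntitoneOn (fun s => g (s / N)) (Icc 0 (0 + N)) :=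
    fun s _ t _ hst => hg (div_le_div_of_nonneg_right hst hN'.le)
  have hlower := hanti.sum_le_integral
  have hupper := hanti.integral_le_sum
  simp only [zero_add] at hlower hupper
  rw [hrescale] at hlower hupper
  exact ⟨(inv_mul_le_iff₀ hN').2 hlower, (le_inv_mul_iff₀ hN').2 hupper⟩

lemma Antitone.abs_intervalIntegral_sub_riemannSum_le {g : ℝ → ℝ} (hg : Antitone g)
    (hg0 : ∀ t, 0 ≤ g t) (hg1 : ∀ t, g t ≤ 1) {N : ℕ} (hN : N ≠ 0) :
    |(∫ t in 0..1, g t) - (N : ℝ)⁻¹ * ∑ i ∈ Finset.range N, g ((i + 1 : ℕ) / N)| ≤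
      (N : ℝ)⁻¹ := by
  obtain ⟨hlower, hupper⟩ := hg.rightSum_le_intervalIntegral_le_leftSum hN
  have htelescope :
      ∑ i ∈ Finset.range N, g (i / N) - ∑ i ∈ Finset.range N, g ((i + 1 : ℕ) / N) =
        g 0 - g 1 := by
    rw [← Finset.sum_sub_distrib, Finset.sum_range_sub' (fun i : ℕ => g (i / N))]
    simp [hN]
  rw [abs_of_nonneg (by linarith)]
  calc _ ≤ (N : ℝ)⁻¹ * ∑ i ∈ Finset.range N, g (i / N)
        - (N : ℝ)⁻¹ * ∑ i ∈ Finset.range N, g ((i + 1 : ℕ) / N) := by linarith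
    _ = (N : ℝ)⁻¹ * (g 0 - g 1) := by rw [← mul_sub, htelescope]
    _ ≤ (N : ℝ)⁻¹ := mul_le_of_le_one_right (by positivity) (by linarith [hg0 1, hg1 0])

/- Dominated convergence is not available along an arbitrary filter (such as a free ultrafilter);
monotonicity makes Riemann sums approximate all the integrals uniformly instead. -/
theorem tendsto_intervalIntegral_of_antitone {ι : Type*} {l : Filter ι} {g : ι → ℝ → ℝ}
    {G : ℝ → ℝ} (hg : ∀ i, Antitone (g i)) (hg0 : ∀ i t, 0 ≤ g i t) (hg1 : ∀ i t, g i t ≤ 1)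
    (hG : ∀ t, Tendsto (fun i => g i t) l (𝓝 (G t))) :
    Tendsto (fun i => ∫ t in 0..1, g i t) l (𝓝 (∫ t in 0..1, G t)) := by
  rcases l.eq_or_neBot with rfl | hl
  · exact tendsto_bot
  have hGanti : Antitone G := fun s t hst =>
    le_of_tendsto_of_tendsto' (hG t) (hG s) fun i => hg i hst
  have hG0 : ∀ t, 0 ≤ G t := fun t => ge_of_tendsto' (hG t) (hg0 · t)
  have hG1 : ∀ t, G t ≤ 1 := fun t => le_of_tendsto' (hG t) (hg1 · t)
  rw [Metric.tendsto_nhds]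
  intro δ hδ
  obtain ⟨N, hN⟩ := exists_nat_one_div_lt (by positivity : 0 < δ / 3)
  rw [one_div, ← Nat.cast_succ] at hN
  set S : (ℝ → ℝ) → ℝ := fun f =>
    ((N + 1 : ℕ) : ℝ)⁻¹ * ∑ i ∈ Finset.range (N + 1), f ((i + 1 : ℕ) / (N + 1 : ℕ))
  have hS : Tendsto (fun i => S (g i)) l (𝓝 (S G)) :=
    (tendsto_finsetSum _ fun k _ => hG _).const_mul _
  filter_upwards [Metric.tendsto_nhds.1 hS _ (by positivity : 0 < δ / 3)] with i hi
  have hgi := (hg i).abs_intervalIntegral_sub_riemannSum_le (hg0 i) (hg1 i) N.succ_ne_zero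
  have hGN := hGanti.abs_intervalIntegral_sub_riemannSum_le hG0 hG1 N.succ_ne_zero
  rw [Real.dist_eq] at hi ⊢
  calc |(∫ t in 0..1, g i t) - ∫ t in 0..1, G t|
      ≤ |(∫ t in 0..1, g i t) - S (g i)| + |S (g i) - S G| + |S G - ∫ t in 0..1, G t| :=
        (abs_sub_le _ (S G) _).trans (by gcongr; exact abs_sub_le _ _ _)
    _ < δ := by rw [abs_sub_comm (S G)]; linarith

lemma setIntegral_Ioi_zero_eq_intervalIntegral {g : ℝ → ℝ} (hg : ∀ t, 1 ≤ t → g t = 0) :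
    ∫ t in Ioi 0, g t = ∫ t in 0..1, g t := by
  rw [intervalIntegral.integral_of_le zero_le_one,
    setIntegral_eq_of_subset_of_forall_sdiff_eq_zero measurableSet_Ioi Ioc_subset_Ioi_self]
  rintro t ⟨ht, ht'⟩
  exact hg t (le_of_lt (not_le.1 fun h => ht' ⟨ht, h⟩))

lemma setOf_lt_eq_empty_of_le {X : Type*} {f : X → ℝ} (hf : ∀ x, f x ≤ 1) {t : ℝ}
    (ht : 1 ≤ t) : {x | t < f x} = ∅ :=
  eq_empty_of_forall_notMem fun x hx => (hx.trans_le (hf x)).not_ge ht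

section LayerCake

variable {X : Type*} [MeasurableSpace X] {f : X → ℝ}

lemma faIntegral_eq_intervalIntegral {μ : Set X → ℝ} (hμ : μ ∅ = 0) (hf0 : ∀ x, 0 ≤ f x)
    (hf1 : ∀ x, f x ≤ 1) : faIntegral μ f = ∫ t in 0..1, μ {x | t < f x} := by
  have hneg : ∫ t in Ioi 0, μ {x | f x < -t} = 0 := by
    refine setIntegral_eq_zero_of_forall_eq_zero fun t (ht : 0 < t) => ?_
    have hempty : {x | f x < -t} = ∅ :=
      eq_empty_of_forall_notMem fun x (hx : f x < -t) => (hf0 x).not_gt (by linarith)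
    rw [hempty, hμ]
  rw [faIntegral, hneg, sub_zero, setIntegral_Ioi_zero_eq_intervalIntegral fun t ht => by
    rw [setOf_lt_eq_empty_of_le hf1 ht, hμ]]

lemma integral_eq_intervalIntegral_measureReal (ν : Measure X) [IsFiniteMeasure ν]
    (hf : Measurable f) (hf0 : ∀ x, 0 ≤ f x) (hf1 : ∀ x, f x ≤ 1) :
    ∫ x, f x ∂ν = ∫ t in 0..1, ν.real {x | t < f x} := by
  have hint : Integrable f ν := .of_bound hf.aestronglyMeasurable 1 <| ae_of_all _ fun x => by
    rw [Real.norm_of_nonneg (hf0 x)]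
    exact hf1 x
  rw [hint.integral_eq_integral_meas_lt (ae_of_all _ hf0),
    setIntegral_Ioi_zero_eq_intervalIntegral fun t ht => by simp [setOf_lt_eq_empty_of_le hf1 ht]]

end LayerCake

section Ultralimit

variable {ι X : Type*} [MeasurableSpace X] (U : Ultrafilter ι) (c : ι → Measure X)

noncomputable def ultralimReal : Set X → ℝ :=
  fun E => limUnder (U : Filter ι) fun i => (c i).real E

variable [∀ i, IsProbabilityMeasure (c i)]

lemma tendsto_ultralimReal (E : Set X) :
    Tendsto (fun i => (c i).real E) U (𝓝 (ultralimReal U c E)) := by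
  refine tendsto_nhds_limUnder ?_
  obtain ⟨a, -, ha⟩ := isCompact_Icc.ultrafilter_le_nhds' (U.map fun i => (c i).real E)
    (Ultrafilter.mem_map.2 (univ_mem' fun i => ⟨measureReal_nonneg, measureReal_le_one⟩))
  exact ⟨a, ha⟩

lemma isFinAdd_ultralimReal : IsFinAdd (ultralimReal U c) := by
  refine ⟨tendsto_nhds_unique (tendsto_ultralimReal U c ∅) (by simp), fun E F _ hF hEF => ?_⟩
  refine tendsto_nhds_unique (tendsto_ultralimReal U c _) ?_
  simp_rw [fun i => measureReal_union (μ := c i) hEF hF]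
  exact (tendsto_ultralimReal U c E).add (tendsto_ultralimReal U c F)

lemma isNonnegSF_ultralimReal : IsNonnegSF (ultralimReal U c) :=
  fun E _ => ge_of_tendsto' (tendsto_ultralimReal U c E) fun _ => measureReal_nonneg

lemma ultralimReal_univ : ultralimReal U c univ = 1 :=
  tendsto_nhds_unique (tendsto_ultralimReal U c univ) (by simp)

lemma markovOp_ultralimReal {p : X → Set X → ℝ} (hp : IsTransFun p) {E : Set X}
    (hE : MeasurableSet E)
    (hc : Tendsto (fun i => (hp.toKernel ∘ₘ c i).real E - (c i).real E) U (𝓝 0)) :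
    markovOp p (ultralimReal U c) E = ultralimReal U c E := by
  have hf0 : ∀ x, 0 ≤ p x E := fun x => hp.nonneg x hE
  have hf1 : ∀ x, p x E ≤ 1 := fun x => hp.le_one x hE
  have hlayer (i : ι) :
      (hp.toKernel ∘ₘ c i).real E = ∫ t in 0..1, (c i).real {x | t < p x E} := by
    simp_rw [Kernel.measureReal_comp_eq_integral _ _ hE, hp.toKernel_real _ hE]
    exact integral_eq_intervalIntegral_measureReal _ (hp.measurable hE) hf0 hf1
  have hlim : Tendsto (fun i => (hp.toKernel ∘ₘ c i).real E) U
      (𝓝 (markovOp p (ultralimReal U c) E)) := by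
    simp_rw [hlayer, markovOp,
      faIntegral_eq_intervalIntegral (isFinAdd_ultralimReal U c).1 hf0 hf1]
    exact tendsto_intervalIntegral_of_antitone
      (fun i s t hst => measureReal_mono fun x hx => hst.trans_lt hx)
      (fun _ _ => measureReal_nonneg) (fun _ _ => measureReal_le_one)
      fun t => tendsto_ultralimReal U c _
  refine tendsto_nhds_unique hlim ?_
  simpa using hc.add (tendsto_ultralimReal U c E)

end Ultralimit

theorem theorem7_8_general {X : Type*} [MeasurableSpace X]
    (p : X → Set X → ℝ) (hp : IsTransFun p)
    (eps : ℕ → ℝ) (K : ℕ → Set X)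
    (heps0 : ∀ n, 0 ≤ eps n) (hepslim : Tendsto eps atTop (nhds 0))
    (hKmeas : ∀ n, MeasurableSet (K n)) (hKne : ∀ n, (K n).Nonempty)
    (hKmono : ∀ n, K (n + 1) ⊆ K n) (hKinter : (⋂ n, K n) = ∅)
    (hKp : ∀ n, ∀ x ∈ K (n + 1), 1 - eps n ≤ p x (K n)) :
    ∃ μ : Set X → ℝ, IsFinAdd μ ∧ IsNonnegSF μ ∧ μ Set.univ = 1 ∧ IsPurelyFinAdd μ ∧
      (∀ E : Set X, MeasurableSet E → markovOp p μ E = μ E) ∧ ∀ n, μ (K n) = 1 := by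
  obtain ⟨c, hc, hc_inv, hc_K⟩ := hp.toKernel.exists_almostInvariant_seq hKmeas hKne
    (antitone_nat_of_succ_le hKmono) heps0 hepslim fun n x hx => by
      simpa only [hp.toKernel_real x (hKmeas n)] using hKp n x hx
  set U := Ultrafilter.of (atTop : Filter ℕ)
  have hU : (U : Filter ℕ) ≤ atTop := Ultrafilter.of_le atTop
  have hμK (n : ℕ) : ultralimReal U c (K n) = 1 :=
    tendsto_nhds_unique (tendsto_ultralimReal U c _) ((hc_K n).mono_left hU)
  have hμKc (n : ℕ) : ultralimReal U c (K n)ᶜ = 0 := by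
    have := (isFinAdd_ultralimReal U c).2 _ _ (hKmeas n) (hKmeas n).compl disjoint_compl_right
    rw [union_compl_self, ultralimReal_univ, hμK] at this
    linarith
  refine ⟨ultralimReal U c, isFinAdd_ultralimReal U c, isNonnegSF_ultralimReal U c,
    ultralimReal_univ U c, isPurelyFinAdd_of_iUnion_null (fun n => (hKmeas n).compl) ?_ hμKc,
    fun E hE => markovOp_ultralimReal U c hp hE ((hc_inv E).mono_left hU), hμK⟩
  rw [← compl_iInter, hKinter, compl_empty]

/-- Theorem 7.8 of [4] (criterion Z): if there are `ε_n ≥ 0`, `ε_n → 0`, and nonempty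
measurable sets `K_n` decreasing to `∅` with `p(x,K_n) ≥ 1 - ε_n` for `x ∈ K_{n+1}`,
then there is an invariant purely finitely additive probability measure `μ` with
`μ(K_n) = 1` for all `n`. -/
theorem theorem7_8 {X : Type*} [MeasurableSpace X]
    (hsingl : ∀ x : X, MeasurableSet ({x} : Set X))
    (p : X → Set X → ℝ) (hp : IsTransFun p)
    (eps : ℕ → ℝ) (K : ℕ → Set X)
    (heps0 : ∀ n, 0 ≤ eps n) (hepslim : Tendsto eps atTop (nhds 0))
    (hKmeas : ∀ n, MeasurableSet (K n)) (hKne : ∀ n, (K n).Nonempty)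
    (hKmono : ∀ n, K (n + 1) ⊆ K n) (hKinter : (⋂ n, K n) = ∅)
    (hKp : ∀ n, ∀ x ∈ K (n + 1), 1 - eps n ≤ p x (K n)) :
    ∃ μ : Set X → ℝ, IsFinAdd μ ∧ IsNonnegSF μ ∧ μ Set.univ = 1 ∧ IsPurelyFinAdd μ ∧
      (∀ E : Set X, MeasurableSet E → markovOp p μ E = μ E) ∧ ∀ n, μ (K n) = 1 :=
  theorem7_8_general p hp eps K heps0 hepslim hKmeas hKne hKmono hKinter hKp
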